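/- arXiv:2511.15838 — 6 statements merged into one kernel-verified Lean document; each statement's English description precedes it below -/
import Mathlib

section
/- Let γ > 0 and α be real numbers, let (err_t)_{t≥1} be a sequence of real numbers, and let (α_t)_{t≥1} be a real sequence satisfying the online update rule α_{t+1} = α_t + γ(α − err_t) for all t ≥ 1. Then for every integer T ≥ 1, the time-averaged error satisfies (1/T) · Σ_{t=1}^{T} err_t ≤ α + (α_1 − α_{T+1})/(T·γ). -/
/-- OCP finite-horizon error bound (Gibbs–Candès, Prop. 4.1): if
`α_{t+1} = α_t + γ(α − err_t)`, then for every `T ≥ 1`,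
`(1/T) Σ_{t=1}^T err_t ≤ α + (α_1 − α_{T+1})/(Tγ)`. -/
theorem ocp_average_error_bound
    (γ α : ℝ) (hγ : 0 < γ)
    (err αt : ℕ → ℝ)
    (hupd : ∀ t : ℕ, 1 ≤ t → αt (t + 1) = αt t + γ * (α - err t)) :
    ∀ T : ℕ, 1 ≤ T →
      (1 / (T : ℝ)) * ∑ t ∈ Finset.Icc 1 T, err t
        ≤ α + (αt 1 - αt (T + 1)) / ((T : ℝ) * γ) := by
  have key : ∀ T : ℕ, 1 ≤ T →
      αt (T + 1) = αt 1 + γ * ((T : ℝ) * α - ∑ t ∈ Finset.Icc 1 T, err t) := by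
    intro T hT
    induction T with
    | zero => omega
    | succ n ih =>
      rcases Nat.eq_or_lt_of_le hT with h | h
      · simp [← h, hupd 1 le_rfl]
      · have hn : 1 ≤ n := by omega
        rw [hupd (n + 1) (by omega), ih hn,
          Finset.sum_Icc_succ_top (by omega : 1 ≤ n + 1)]
        push_cast
        ring
  intro T hT
  have hTpos : (0 : ℝ) < T := by exact_mod_cast hT
  rw [key T hT]
  have : (αt 1 - (αt 1 + γ * ((T : ℝ) * α - ∑ t ∈ Finset.Icc 1 T, err t)))
      / ((T : ℝ) * γ) = (∑ t ∈ Finset.Icc 1 T, err t) / (T : ℝ) - α := by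
    field_simp
    ring
  rw [this]
  linarith [le_of_eq (one_div_mul_eq_div ((T : ℝ)) (∑ t ∈ Finset.Icc 1 T, err t))]
end

section
/- Let γ > 0 and α ∈ [0,1] be real numbers, let (err_t)_{t≥1} be a sequence with err_t ∈ {0,1} for all t, and let (α_t)_{t≥1} satisfy the online update rule α_{t+1} = α_t + γ(α − err_t) for all t ≥ 1, with α_1 ∈ [0,1]. Assume moreover that err_t = 0 whenever α_t < 0, and err_t = 1 whenever α_t > 1. Then α_t ∈ [−γ, 1+γ] for every t ≥ 1. -/
/-- OCP boundedness lemma (Gibbs–Candès, Lemma 4.1): under the update rule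
`α_{t+1} = α_t + γ(α − err_t)` with `err_t ∈ {0,1}`, `α, α_1 ∈ [0,1]`,
`err_t = 0` whenever `α_t < 0`, and `err_t = 1` whenever `α_t > 1`,
the sequence satisfies `α_t ∈ [−γ, 1+γ]` for all `t ≥ 1`. -/
theorem ocp_alpha_bounded
    (γ α : ℝ) (hγ : 0 < γ) (hα : α ∈ Set.Icc (0 : ℝ) 1)
    (err αt : ℕ → ℝ)
    (herr : ∀ t : ℕ, 1 ≤ t → err t = 0 ∨ err t = 1)
    (hupd : ∀ t : ℕ, 1 ≤ t → αt (t + 1) = αt t + γ * (α - err t))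
    (hinit : αt 1 ∈ Set.Icc (0 : ℝ) 1)
    (hlow : ∀ t : ℕ, 1 ≤ t → αt t < 0 → err t = 0)
    (hhigh : ∀ t : ℕ, 1 ≤ t → αt t > 1 → err t = 1) :
    ∀ t : ℕ, 1 ≤ t → αt t ∈ Set.Icc (-γ) (1 + γ) := by
  obtain ⟨hα0, hα1⟩ := hα
  obtain ⟨hi0, hi1⟩ := hinit
  intro t ht
  induction t with
  | zero => omega
  | succ n ih =>
    rcases Nat.eq_or_lt_of_le ht with h | h
    · rw [← h]; constructor <;> linarith
    · have hn : 1 ≤ n := by omega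
      have ihn := ih hn
      have hu := hupd n hn
      rcases lt_trichotomy (αt n) 0 with hc | hc | hc
      · have he := hlow n hn hc
        rw [hu, he]
        constructor <;> nlinarith [ihn.1]
      · rcases herr n hn with he | he <;> rw [hu, he] <;>
          constructor <;> nlinarith
      · rcases le_or_gt (αt n) 1 with hc1 | hc1
        · rcases herr n hn with he | he <;> rw [hu, he] <;>
            constructor <;> nlinarith
        · have he := hhigh n hn hc1
          rw [hu, he]
          constructor <;> nlinarith [ihn.2]
end

section
/- Let γ > 0 and α be real numbers, let (err_t)_{t≥1} be a sequence of real numbers, and let (α_t)_{t≥1} satisfy the online update rule α_{t+1} = α_t + γ(α − err_t) for all t ≥ 1. If the sequence (α_t) is bounded (in particular, if α_t ∈ [−γ, 1+γ] for all t), then the time-averaged error converges to the target level: lim_{T→∞} (1/T) · Σ_{t=1}^{T} err_t = α. -/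
/-!
Summing the update rule telescopes: `γ * ∑_{t=1}^T (α - err_t) = α_{T+1} - α_1`. The right side
stays bounded, so after dividing by `γ T` the average error differs from `α` by `O(1/T)`.
-/

open Filter Finset Topology

theorem sum_Icc_increments_eq_sub {R : Type*} [CommRing R] {γ α : R} {err a : ℕ → R}
    (hupd : ∀ t : ℕ, 1 ≤ t → a (t + 1) = a t + γ * (α - err t)) (T : ℕ) :
    γ * ∑ t ∈ Icc 1 T, (α - err t) = a (T + 1) - a 1 := by
  rw [← Ico_add_one_right_eq_Icc, ← sum_Ico_sub a (by omega), mul_sum]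
  refine sum_congr rfl fun t ht => ?_
  rw [hupd t (mem_Ico.1 ht).1]
  ring

/-- OCP long-term coverage (Gibbs–Candès, Prop. 4.1): if
`α_{t+1} = α_t + γ(α − err_t)` and the sequence `(α_t)` is bounded, then the
time-averaged error converges to the target level `α`. -/
theorem ocp_longterm_coverage
    (γ α : ℝ) (hγ : 0 < γ)
    (err αt : ℕ → ℝ)
    (hupd : ∀ t : ℕ, 1 ≤ t → αt (t + 1) = αt t + γ * (α - err t))
    (hbounded : ∃ M : ℝ, ∀ t : ℕ, 1 ≤ t → |αt t| ≤ M) :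
    Tendsto (fun T : ℕ => (1 / (T : ℝ)) * ∑ t ∈ Finset.Icc 1 T, err t)
      atTop (nhds α) := by
  obtain ⟨M, hM⟩ := hbounded
  have hdrift_le : ∀ T : ℕ, |αt (T + 1) - αt 1| ≤ 2 * M := fun T =>
    (abs_sub _ _).trans (by linarith [hM (T + 1) (by omega), hM 1 le_rfl])
  have hdrift : Tendsto (fun T : ℕ => (αt (T + 1) - αt 1) / (γ * T)) atTop (𝓝 0) :=
    tendsto_bdd_div_atTop_nhds_zero
      (.of_forall fun T => (abs_le.1 (hdrift_le T)).1)
      (.of_forall fun T => (abs_le.1 (hdrift_le T)).2)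
      (tendsto_natCast_atTop_atTop.const_mul_atTop hγ)
  have haverage : ∀ T : ℕ, 1 ≤ T → α - (αt (T + 1) - αt 1) / (γ * T) =
      (1 / (T : ℝ)) * ∑ t ∈ Icc 1 T, err t := fun T hT => by
    rw [← sum_Icc_increments_eq_sub hupd, sum_sub_distrib, sum_const, Nat.card_Icc,
      nsmul_eq_mul]
    have : (T : ℝ) ≠ 0 := by positivity
    field_simp
    push_cast
    ring
  simpa using (tendsto_const_nhds.sub hdrift).congr' <|
    (eventually_ge_atTop 1).mono haverage
end

section
/- Let γ > 0 and α ∈ [0,1] be real numbers, let (err_t)_{t≥1} be a sequence of real numbers, and let (α_t)_{t≥1} satisfy the online update rule α_{t+1} = α_t + γ(α − err_t) for all t ≥ 1, with α_1 ∈ [0,1] and α_t ∈ [−γ, 1+γ] for all t. Then for every integer T ≥ 1, |(1/T) · Σ_{t=1}^{T} err_t − α| ≤ (1+γ)/(T·γ). -/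
/-- Quantitative two-sided convergence rate for OCP: under the update rule
`α_{t+1} = α_t + γ(α − err_t)` with `α, α_1 ∈ [0,1]` and `α_t ∈ [−γ, 1+γ]`
for all `t ≥ 1`, one has `|(1/T) Σ_{t=1}^T err_t − α| ≤ (1+γ)/(Tγ)`. -/
theorem ocp_two_sided_rate
    (γ α : ℝ) (hγ : 0 < γ) (hα : α ∈ Set.Icc (0 : ℝ) 1)
    (err αt : ℕ → ℝ)
    (hupd : ∀ t : ℕ, 1 ≤ t → αt (t + 1) = αt t + γ * (α - err t))
    (hinit : αt 1 ∈ Set.Icc (0 : ℝ) 1)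
    (hbound : ∀ t : ℕ, 1 ≤ t → αt t ∈ Set.Icc (-γ) (1 + γ)) :
    ∀ T : ℕ, 1 ≤ T →
      |(1 / (T : ℝ)) * ∑ t ∈ Finset.Icc 1 T, err t - α|
        ≤ (1 + γ) / ((T : ℝ) * γ) := by
  have tel : ∀ T : ℕ, 1 ≤ T →
      αt (T + 1) = αt 1 + γ * ∑ t ∈ Finset.Icc 1 T, (α - err t) := by
    intro T hT
    induction T with
    | zero => omega
    | succ n ih =>
      rcases Nat.eq_or_lt_of_le hT with h | h
      · simp [← h, hupd 1 le_rfl]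
      · have hn : 1 ≤ n := by omega
        rw [hupd (n + 1) (by omega), ih hn,
          Finset.sum_Icc_succ_top (by omega : 1 ≤ n + 1)]
        ring
  intro T hT
  have hTpos : (0 : ℝ) < T := by exact_mod_cast hT
  have htel := tel T hT
  have hb := hbound (T + 1) (by omega)
  obtain ⟨h1, h2⟩ := hinit
  obtain ⟨h3, h4⟩ := hb
  have hsum : ∑ t ∈ Finset.Icc 1 T, (α - err t)
      = T * α - ∑ t ∈ Finset.Icc 1 T, err t := by
    rw [Finset.sum_sub_distrib, Finset.sum_const, Nat.card_Icc]
    simp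
  rw [hsum] at htel
  have key : (1 / (T : ℝ)) * ∑ t ∈ Finset.Icc 1 T, err t - α
      = (αt 1 - αt (T + 1)) / (T * γ) := by
    rw [htel]
    field_simp
    ring
  rw [key, abs_div, abs_of_pos (by positivity : (0:ℝ) < (T:ℝ) * γ)]
  gcongr
  rw [abs_le]
  constructor <;> linarith
end

section
/- Let λ > 0 and α ∈ [0,1] be real numbers, let (err^f_t)_{t≥1} be a sequence with err^f_t ∈ {0,1} for all t, and let (α_t)_{t≥1} satisfy the online update rule α_{t+1} = α_t + λ(α − err^f_t) for all t ≥ 1, with α_1 ∈ [0,1], err^f_t = 0 whenever α_t < 0, and err^f_t = 1 whenever α_t > 1. Then for every T ≥ 1, (1/T) · Σ_{t=1}^{T} err^f_t ≤ α + (α_1 − α_{T+1})/(T·λ), and moreover lim_{T→∞} (1/T) · Σ_{t=1}^{T} err^f_t = α. -/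
open Filter

/-!
Summing the update rule telescopes to the identity
`(1/T) Σ_{t ≤ T} err_t = α + (α_1 - α_{T+1}) / (T λ)`, which gives the bound with equality.
The iterates never leave `[-λ, 1 + λ]`: a step moves by at most `λ`, and outside `[0, 1]` the
forced error pushes the iterate back towards `[0, 1]`. Hence the numerator `α_1 - α_{T+1}` stays
bounded and the correction term vanishes as `T → ∞`.
-/

lemma add_mem_Icc_of_restoring {a b lam x d : ℝ} (hx : x ∈ Set.Icc (a - lam) (b + lam))
    (hd : |d| ≤ lam) (hlow : x < a → 0 ≤ d) (hhigh : b < x → d ≤ 0) :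
    x + d ∈ Set.Icc (a - lam) (b + lam) := by
  obtain ⟨hx₁, hx₂⟩ := hx
  obtain ⟨hd₁, hd₂⟩ := abs_le.mp hd
  constructor
  · rcases lt_or_ge x a with h | h
    · linarith [hlow h]
    · linarith
  · rcases lt_or_ge b x with h | h
    · linarith [hhigh h]
    · linarith

lemma tendsto_div_natCast_mul_of_abs_le {g : ℕ → ℝ} {C : ℝ} (hg : ∀ T, |g T| ≤ C) (c : ℝ) :
    Tendsto (fun T : ℕ => g T / (T * c)) atTop (nhds 0) := by
  have hinv : Tendsto (fun T : ℕ => ((T : ℝ) * c)⁻¹) atTop (nhds 0) := by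
    simpa only [mul_inv, zero_mul] using tendsto_inv_atTop_nhds_zero_nat.mul_const c⁻¹
  have hbdd : IsBoundedUnder (· ≤ ·) atTop (norm ∘ g) := isBoundedUnder_of ⟨C, hg⟩
  simpa only [div_eq_inv_mul] using hinv.zero_mul_isBoundedUnder_le hbdd

section OnlineUpdate

variable {lam α : ℝ} {errf αt : ℕ → ℝ}

lemma online_update_telescope (hupd : ∀ t : ℕ, 1 ≤ t → αt (t + 1) = αt t + lam * (α - errf t))
    (T : ℕ) : αt (T + 1) = αt 1 + lam * (T * α - ∑ t ∈ Finset.Icc 1 T, errf t) := by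
  induction T with
  | zero => simp
  | succ T ih =>
    rw [hupd (T + 1) (Nat.le_add_left 1 T), ih, Finset.sum_Icc_succ_top (Nat.le_add_left 1 T)]
    push_cast
    ring

lemma online_update_average_eq (hlam : lam ≠ 0)
    (hupd : ∀ t : ℕ, 1 ≤ t → αt (t + 1) = αt t + lam * (α - errf t)) {T : ℕ} (hT : 1 ≤ T) :
    (1 / (T : ℝ)) * ∑ t ∈ Finset.Icc 1 T, errf t = α + (αt 1 - αt (T + 1)) / ((T : ℝ) * lam) := by
  have hT₀ : (T : ℝ) ≠ 0 := by positivity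
  rw [online_update_telescope hupd T]
  field_simp
  ring

lemma online_update_mem_Icc (hlam : 0 ≤ lam) (hα : α ∈ Set.Icc (0 : ℝ) 1)
    (herr : ∀ t : ℕ, 1 ≤ t → errf t = 0 ∨ errf t = 1)
    (hupd : ∀ t : ℕ, 1 ≤ t → αt (t + 1) = αt t + lam * (α - errf t))
    (hinit : αt 1 ∈ Set.Icc (0 : ℝ) 1)
    (hlow : ∀ t : ℕ, 1 ≤ t → αt t < 0 → errf t = 0)
    (hhigh : ∀ t : ℕ, 1 ≤ t → αt t > 1 → errf t = 1) :
    ∀ t, 1 ≤ t → αt t ∈ Set.Icc (-lam) (1 + lam) := by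
  obtain ⟨hα₀, hα₁⟩ := hα
  refine Nat.le_induction ⟨by linarith [hinit.1], by linarith [hinit.2]⟩ fun t ht ih => ?_
  rw [hupd t ht]
  rw [← zero_sub] at ih ⊢
  refine add_mem_Icc_of_restoring ih ?_ ?_ ?_
  · rw [abs_mul, abs_of_nonneg hlam]
    refine mul_le_of_le_one_right hlam (abs_le.mpr ?_)
    rcases herr t ht with h | h <;> rw [h] <;> constructor <;> linarith
  · intro h
    rw [hlow t ht h, sub_zero]
    positivity
  · intro h
    rw [hhigh t ht h]
    exact mul_nonpos_of_nonneg_of_nonpos hlam (by linarith)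

end OnlineUpdate

/-- Corollary 1 (long-term coverage of FOCP/AFOCP): under the update rule
`α_{t+1} = α_t + λ(α − err^f_t)` with `err^f_t ∈ {0,1}`, `α, α_1 ∈ [0,1]`,
`err^f_t = 0` whenever `α_t < 0`, and `err^f_t = 1` whenever `α_t > 1`, the
time-averaged error is bounded as
`(1/T) Σ_{t=1}^T err^f_t ≤ α + (α_1 − α_{T+1})/(Tλ)` for all `T ≥ 1`,
and it converges to `α` as `T → ∞`. -/
theorem focp_longterm_coverage
    (lam α : ℝ) (hlam : 0 < lam) (hα : α ∈ Set.Icc (0 : ℝ) 1)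
    (errf αt : ℕ → ℝ)
    (herr : ∀ t : ℕ, 1 ≤ t → errf t = 0 ∨ errf t = 1)
    (hupd : ∀ t : ℕ, 1 ≤ t → αt (t + 1) = αt t + lam * (α - errf t))
    (hinit : αt 1 ∈ Set.Icc (0 : ℝ) 1)
    (hlow : ∀ t : ℕ, 1 ≤ t → αt t < 0 → errf t = 0)
    (hhigh : ∀ t : ℕ, 1 ≤ t → αt t > 1 → errf t = 1) :
    (∀ T : ℕ, 1 ≤ T →
      (1 / (T : ℝ)) * ∑ t ∈ Finset.Icc 1 T, errf t
        ≤ α + (αt 1 - αt (T + 1)) / ((T : ℝ) * lam)) ∧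
    Tendsto (fun T : ℕ => (1 / (T : ℝ)) * ∑ t ∈ Finset.Icc 1 T, errf t)
      atTop (nhds α) := by
  have havg := fun T (hT : 1 ≤ T) => online_update_average_eq hlam.ne' hupd hT
  refine ⟨fun T hT => (havg T hT).le, ?_⟩
  have hdrift : ∀ T : ℕ, |αt 1 - αt (T + 1)| ≤ 1 + lam := fun T => by
    obtain ⟨hlo, hhi⟩ :=
      online_update_mem_Icc hlam.le hα herr hupd hinit hlow hhigh (T + 1) (Nat.le_add_left 1 T)
    exact abs_le.mpr ⟨by linarith [hinit.1], by linarith [hinit.2]⟩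
  have hlim := (tendsto_div_natCast_mul_of_abs_le hdrift lam).const_add α
  rw [add_zero] at hlim
  exact hlim.congr' (eventually_atTop.mpr ⟨1, fun T hT => (havg T hT).symm⟩)
end

section
/- Let Ξ be a type, let H : ℝ × Ξ → ℝ satisfy |H(m, x) − H(m', x)| ≤ R·|m − m'|^β for all m, m' ∈ ℝ, x ∈ Ξ, with constants R > 0, β > 0, and let C > 0 with C ≤ √L. Fix integers T ≥ 1 and L ≥ 1 and a real constant ε > 0. Write δ = 2·max{R,1}·(C/√L)^{min{β,1}}. For each t = 1,…,T, let (m_{t,τ}, x_{t,τ})_{τ=1,…,L} be a family in ℝ × Ξ, let x_t ∈ Ξ be a test input, and let qf_t, QH_t, q_t be real numbers. Assume: (1) Length preservation: (1/T)·Σ_{t=1}^{T} QH_t < (1/T)·Σ_{t=1}^{T} q_t + ε; (2) Expansion: R · (1/T)·Σ_{t=1}^{T} (1/L)·Σ_{τ=1}^{L} |qf_t − m_{t,τ}|^β < (1/T)·Σ_{t=1}^{T} [QH_t − (1/L)·Σ_{τ=1}^{L} H(m_{t,τ}, x_{t,τ})] − ε − δ; (3) Quantile stability: (1/T)·Σ_{t=1}^{T}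 |H(qf_t, x_t) − (1/L)·Σ_{τ=1}^{L} H(qf_t, x_{t,τ})| ≤ C/√L. Then the time-averaged feature-based interval length is strictly smaller than the time-averaged output-based interval length: (1/T)·Σ_{t=1}^{T} H(qf_t, x_t) < (1/T)·Σ_{t=1}^{T} q_t. -/
private lemma sum_le_sum_three {s : Finset ℕ} (a A c d : ℕ → ℝ) (R : ℝ)
    (h : ∀ t ∈ s, a t ≤ A t + c t + R * d t) :
    ∑ t ∈ s, a t ≤ ∑ t ∈ s, A t + ∑ t ∈ s, c t + R * ∑ t ∈ s, d t := by
  calc ∑ t ∈ s, a t ≤ ∑ t ∈ s, (A t + c t + R * d t) := Finset.sum_le_sum h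
    _ = ∑ t ∈ s, A t + ∑ t ∈ s, c t + R * ∑ t ∈ s, d t := by
        rw [Finset.sum_add_distrib, Finset.sum_add_distrib, ← Finset.mul_sum]

/-- Theorem 3 (formal version of Theorem 2): under the Hölder condition,
length preservation, expansion, and quantile stability, AFOCP provably
outperforms AOCP in time-averaged prediction interval length:
`(1/T) Σ_t H(qf_t, x_t) < (1/T) Σ_t q_t`. -/
theorem afocp_outperforms_aocp
    {Ξ : Type*} (H : ℝ → Ξ → ℝ) (R β : ℝ) (hR : 0 < R) (hβ : 0 < β)
    (hH : ∀ (m m' : ℝ) (x : Ξ), |H m x - H m' x| ≤ R * |m - m'| ^ β)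
    (T L : ℕ) (hT : 1 ≤ T) (hL : 1 ≤ L)
    (C : ℝ) (hC : 0 < C) (hCL : C ≤ Real.sqrt L)
    (ε : ℝ) (hε : 0 < ε)
    (δ : ℝ) (hδ : δ = 2 * max R 1 * (C / Real.sqrt L) ^ (min β 1))
    (m : ℕ → ℕ → ℝ) (x : ℕ → ℕ → Ξ) (xtest : ℕ → Ξ) (qf QH q : ℕ → ℝ)
    (hlenpres :
      (1 / (T : ℝ)) * ∑ t ∈ Finset.Icc 1 T, QH t
        < (1 / (T : ℝ)) * ∑ t ∈ Finset.Icc 1 T, q t + ε)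
    (hexp :
      R * ((1 / (T : ℝ)) * ∑ t ∈ Finset.Icc 1 T,
          (1 / (L : ℝ)) * ∑ τ ∈ Finset.Icc 1 L, |qf t - m t τ| ^ β)
        < (1 / (T : ℝ)) * ∑ t ∈ Finset.Icc 1 T,
            (QH t - (1 / (L : ℝ)) * ∑ τ ∈ Finset.Icc 1 L, H (m t τ) (x t τ))
          - ε - δ)
    (hstab :
      (1 / (T : ℝ)) * ∑ t ∈ Finset.Icc 1 T,
          |H (qf t) (xtest t)
            - (1 / (L : ℝ)) * ∑ τ ∈ Finset.Icc 1 L, H (qf t) (x t τ)|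
        ≤ C / Real.sqrt L) :
    (1 / (T : ℝ)) * ∑ t ∈ Finset.Icc 1 T, H (qf t) (xtest t)
      < (1 / (T : ℝ)) * ∑ t ∈ Finset.Icc 1 T, q t := by
  have hLpos : (0:ℝ) < (L:ℝ) := by exact_mod_cast hL
  have hTpos : (0:ℝ) < (T:ℝ) := by exact_mod_cast hT
  have hTinv : (0:ℝ) ≤ 1 / (T:ℝ) := by positivity
  have hLinv : (0:ℝ) ≤ 1 / (L:ℝ) := by positivity
  have hsL : 0 < Real.sqrt L := Real.sqrt_pos.mpr hLpos
  -- δ ≥ C / √L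
  have hx1 : C / Real.sqrt L ≤ 1 := (div_le_one hsL).mpr hCL
  have hx0 : 0 < C / Real.sqrt L := div_pos hC hsL
  have hrpow : C / Real.sqrt L ≤ (C / Real.sqrt L) ^ (min β 1) := by
    have := Real.rpow_le_rpow_of_exponent_ge hx0 hx1 (min_le_right β 1)
    rwa [Real.rpow_one] at this
  have hδge : C / Real.sqrt L ≤ δ := by
    rw [hδ]
    have h1 : (1:ℝ) ≤ max R 1 := le_max_right R 1
    have hpow0 : 0 < (C / Real.sqrt L) ^ (min β 1) := Real.rpow_pos_of_pos hx0 _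
    nlinarith
  -- pointwise bound per t
  have key : ∀ t ∈ Finset.Icc 1 T,
      H (qf t) (xtest t)
        ≤ |H (qf t) (xtest t)
            - (1 / (L:ℝ)) * ∑ τ ∈ Finset.Icc 1 L, H (qf t) (x t τ)|
          + (1 / (L:ℝ)) * ∑ τ ∈ Finset.Icc 1 L, H (m t τ) (x t τ)
          + R * ((1 / (L:ℝ)) * ∑ τ ∈ Finset.Icc 1 L, |qf t - m t τ| ^ β) := by
    intro t _
    have hsum : ∑ τ ∈ Finset.Icc 1 L, H (qf t) (x t τ)
        ≤ ∑ τ ∈ Finset.Icc 1 L, H (m t τ) (x t τ)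
          + R * ∑ τ ∈ Finset.Icc 1 L, |qf t - m t τ| ^ β := by
      have := sum_le_sum_three (s := Finset.Icc 1 L)
        (fun τ => H (qf t) (x t τ)) (fun _ => 0)
        (fun τ => H (m t τ) (x t τ)) (fun τ => |qf t - m t τ| ^ β) R
        (by
          intro τ _
          have h := hH (qf t) (m t τ) (x t τ)
          have h2 : H (qf t) (x t τ) - H (m t τ) (x t τ) ≤ R * |qf t - m t τ| ^ β :=
            le_trans (le_abs_self _) h
          linarith)
      simpa using this
    have hsum2 := mul_le_mul_of_nonneg_left hsum hLinv
    rw [mul_add] at hsum2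
    have hcomm : (1 / (L:ℝ)) * (R * ∑ τ ∈ Finset.Icc 1 L, |qf t - m t τ| ^ β)
        = R * ((1 / (L:ℝ)) * ∑ τ ∈ Finset.Icc 1 L, |qf t - m t τ| ^ β) := by ring
    have habs := le_abs_self (H (qf t) (xtest t)
        - (1 / (L:ℝ)) * ∑ τ ∈ Finset.Icc 1 L, H (qf t) (x t τ))
    linarith
  -- sum over t
  have hsumT := sum_le_sum_three (s := Finset.Icc 1 T)
    (fun t => H (qf t) (xtest t))
    (fun t => |H (qf t) (xtest t)
        - (1 / (L:ℝ)) * ∑ τ ∈ Finset.Icc 1 L, H (qf t) (x t τ)|)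
    (fun t => (1 / (L:ℝ)) * ∑ τ ∈ Finset.Icc 1 L, H (m t τ) (x t τ))
    (fun t => (1 / (L:ℝ)) * ∑ τ ∈ Finset.Icc 1 L, |qf t - m t τ| ^ β) R key
  have hmul := mul_le_mul_of_nonneg_left hsumT hTinv
  rw [mul_add, mul_add] at hmul
  have hcomm2 : (1 / (T:ℝ)) * (R * ∑ t ∈ Finset.Icc 1 T,
        (1 / (L:ℝ)) * ∑ τ ∈ Finset.Icc 1 L, |qf t - m t τ| ^ β)
      = R * ((1 / (T:ℝ)) * ∑ t ∈ Finset.Icc 1 T,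
        (1 / (L:ℝ)) * ∑ τ ∈ Finset.Icc 1 L, |qf t - m t τ| ^ β) := by ring
  -- split hexp sum
  have hsplit : (1 / (T:ℝ)) * ∑ t ∈ Finset.Icc 1 T,
        (QH t - (1 / (L:ℝ)) * ∑ τ ∈ Finset.Icc 1 L, H (m t τ) (x t τ))
      = (1 / (T:ℝ)) * ∑ t ∈ Finset.Icc 1 T, QH t
        - (1 / (T:ℝ)) * ∑ t ∈ Finset.Icc 1 T,
            (1 / (L:ℝ)) * ∑ τ ∈ Finset.Icc 1 L, H (m t τ) (x t τ) := by
    rw [Finset.sum_sub_distrib, mul_sub]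
  rw [hsplit] at hexp
  linarith
end
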